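/- arXiv:1306.3469 — 4 statements merged into one kernel-verified Lean document; each statement's English description precedes it below -/
import Mathlib

section
/- Every permutation σ of {1,...,n} with nonempty support can be written as a product of two cycles of lengths m(σ) and n(σ), where the cycle of length n(σ) is interpreted as the identity if n(σ) = 1. -/
open Finset Equiv

/-- `IsCycleOfLen c l` : `c` is a cycle of length `l ≥ 2`, where a "cycle of
length 1" is interpreted as the identity permutation. -/
def IsCycleOfLen {n : ℕ} (c : Equiv.Perm (Fin n)) (l : ℕ) : Prop :=
  (l = 1 ∧ c = 1) ∨ (2 ≤ l ∧ c.IsCycle ∧ c.support.card = l)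

/-- `m(σ)`: the cardinality of the support of `σ`. -/
def mOf {n : ℕ} (σ : Equiv.Perm (Fin n)) : ℕ := σ.support.card

/-- `n(σ)`: the number of nontrivial cycles in the cycle decomposition of `σ`. -/
def nOf {n : ℕ} (σ : Equiv.Perm (Fin n)) : ℕ := σ.cycleType.card

/-
Write σ as a product of disjoint cycles c₁ ⋯ c_k with c_i = formPerm l_i. Gluing two cycle lists
costs one transposition of their last entries: if a = last l₁ ∉ l₂ and b = last l₂, then
formPerm (l₁ ++ l₂) = formPerm l₁ * formPerm l₂ * swap a b. Gluing the lists one at a time gives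
c₁ ⋯ c_k = formPerm (l₁ ++ ⋯ ++ l_k) * formPerm [a_k, …, a₁], a cycle through the whole support
times a cycle through one point of each c_i (trivial when k = 1).
-/

namespace List

variable {α : Type*} [DecidableEq α]

theorem formPerm_cons_of_notMem {a : α} {l : List α} (hl : l ≠ []) (ha : a ∉ l) :
    formPerm (a :: l) = formPerm l * Equiv.swap a (l.getLast hl) := by
  obtain ⟨x, xs, rfl⟩ := exists_cons_of_ne_nil hl
  have hfix : formPerm (x :: xs) a = a := formPerm_apply_of_notMem ha
  have h := swap_apply_apply (formPerm (x :: xs)) a ((x :: xs).getLast hl)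
  rw [hfix, formPerm_apply_getLast, eq_mul_inv_iff_mul_eq] at h
  rw [formPerm_cons_cons, h]

theorem formPerm_append_of_getLast_notMem :
    ∀ {l₁ l₂ : List α} (h₁ : l₁ ≠ []) (h₂ : l₂ ≠ []), l₁.getLast h₁ ∉ l₂ →
      formPerm (l₁ ++ l₂) = formPerm l₁ * formPerm l₂ * Equiv.swap (l₁.getLast h₁) (l₂.getLast h₂)
  | [a], _, _, h₂, ha => by simpa [mul_assoc] using formPerm_cons_of_notMem h₂ ha
  | a :: b :: l, l₂, _, h₂, ha => by
    rw [getLast_cons (cons_ne_nil b l)] at ha ⊢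
    rw [cons_append, cons_append, formPerm_cons_cons, ← cons_append,
      formPerm_append_of_getLast_notMem (cons_ne_nil b l) h₂ ha, formPerm_cons_cons]
    simp only [mul_assoc]

end List

namespace Equiv.Perm

variable {α : Type*} [Fintype α] [DecidableEq α]

theorem IsCycle.exists_nodup_formPerm_eq {c : Perm α} (hc : c.IsCycle) :
    ∃ m : List α, m.Nodup ∧ m.toFinset = c.support ∧ m.formPerm = c := by
  obtain ⟨x, hx, -⟩ := id hc
  have hform : (c.toList x).formPerm = c := by rw [formPerm_toList, IsCycle.cycleOf_eq hc hx]
  refine ⟨c.toList x, nodup_toList c x, ?_, hform⟩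
  rw [← List.support_formPerm_of_nodup _ (nodup_toList c x) (toList_ne_singleton c x), hform]

/-- Since `t` starts at the last entry of `l`, gluing the list `m` of a further disjoint cycle
onto `l` is paid for by prepending the last entry of `m` to `t`. -/
structure TwoCycleSplit (σ : Perm α) (l t : List α) : Prop where
  nodup_left : l.Nodup
  nodup_right : t.Nodup
  toFinset_left : l.toFinset = σ.support
  subset : t ⊆ l
  length_right : t.length = σ.cycleType.card
  head?_right : t.head? = l.getLast?
  eq_mul : σ = l.formPerm * t.formPerm

theorem IsCycle.exists_twoCycleSplit {c : Perm α} (hc : c.IsCycle) :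
    ∃ l t, TwoCycleSplit c l t := by
  obtain ⟨m, hnodup, hsupp, rfl⟩ := hc.exists_nodup_formPerm_eq
  have hm : m ≠ [] := by rintro rfl; exact hc.ne_one List.formPerm_nil
  exact ⟨m, [m.getLast hm], hnodup, List.nodup_singleton _, hsupp, by simp [List.getLast_mem],
    by simp [hc.cycleType], by simp [List.getLast?_eq_some_getLast hm], by simp⟩

theorem TwoCycleSplit.exists_mul_of_disjoint {τ c : Perm α} {l t : List α}
    (h : TwoCycleSplit τ l t) (hl : l ≠ []) (hc : c.IsCycle) (hd : Disjoint τ c) :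
    ∃ l' t', TwoCycleSplit (τ * c) l' t' := by
  obtain ⟨m, hm_nodup, hm_supp, rfl⟩ := hc.exists_nodup_formPerm_eq
  have hm : m ≠ [] := by rintro rfl; exact hc.ne_one List.formPerm_nil
  obtain ⟨t₀, ht⟩ : ∃ t₀, t = l.getLast hl :: t₀ := by
    rw [← List.head?_eq_some_iff, h.head?_right, List.getLast?_eq_some_getLast hl]
  have hlm : l.Disjoint m := by
    intro x hxl hxm
    refine Finset.disjoint_left.mp hd.disjoint_support ?_ (hm_supp ▸ List.mem_toFinset.mpr hxm)
    exact h.toFinset_left ▸ List.mem_toFinset.mpr hxl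
  have hb : m.getLast hm ∉ t := fun hbt => hlm (h.subset hbt) (List.getLast_mem hm)
  have hcomm : Commute t.formPerm m.formPerm := by
    refine Disjoint.commute ?_
    rw [disjoint_iff_disjoint_support]
    refine Finset.disjoint_of_subset_left ?_ hd.disjoint_support
    refine (List.support_formPerm_le t).trans ?_
    rw [← h.toFinset_left]
    exact fun x hx => List.mem_toFinset.mpr (h.subset (List.mem_toFinset.mp hx))
  have happend :=
    List.formPerm_append_of_getLast_notMem hl hm (fun ha => hlm (List.getLast_mem hl) ha)
  refine ⟨l ++ m, m.getLast hm :: t, h.nodup_left.append hm_nodup hlm,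
    List.nodup_cons.mpr ⟨hb, h.nodup_right⟩, ?_, ?_, ?_, ?_, ?_⟩
  · rw [List.toFinset_append, h.toFinset_left, hm_supp, hd.support_mul]
  · exact List.cons_subset.mpr ⟨List.mem_append_right l (List.getLast_mem hm),
      List.Subset.trans h.subset (List.subset_append_left l m)⟩
  · rw [hd.cycleType_mul, hc.cycleType, Multiset.card_add, List.length_cons, h.length_right]
    rfl
  · simp [List.getLast?_append, List.getLast?_eq_some_getLast hm]
  · calc τ * m.formPerm = l.formPerm * m.formPerm * t.formPerm := by
          rw [h.eq_mul, mul_assoc, hcomm.eq, mul_assoc]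
      _ = (l ++ m).formPerm * (m.getLast hm :: t).formPerm := by
          rw [happend, ht, List.formPerm_cons_cons, swap_comm, mul_assoc _ (swap _ _),
            ← mul_assoc (swap _ _), swap_mul_self, one_mul]

theorem exists_twoCycleSplit (σ : Perm α) : ∃ l t, TwoCycleSplit σ l t := by
  induction σ using cycle_induction_on with
  | base_one => exact ⟨[], [], .nil, .nil, by simp, .refl _, by simp, rfl, rfl⟩
  | base_cycles c hc => exact hc.exists_twoCycleSplit
  | induction_disjoint c τ hd hc _ hτ =>
    obtain ⟨l, t, h⟩ := hτ
    rcases eq_or_ne l [] with rfl | hl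
    · have hτ1 : τ = 1 := by simpa using h.toFinset_left.symm
      simpa [hτ1] using hc.exists_twoCycleSplit
    · rw [hd.commute.eq]
      exact h.exists_mul_of_disjoint hl hc hd.symm

end Equiv.Perm

theorem isCycleOfLen_formPerm {n : ℕ} {l : List (Fin n)} (hl : l.Nodup) (hne : l ≠ []) :
    IsCycleOfLen l.formPerm l.length := by
  by_cases h2 : 2 ≤ l.length
  · refine Or.inr ⟨h2, List.isCycle_formPerm hl h2, ?_⟩
    rw [List.support_formPerm_of_nodup l hl, List.toFinset_card_of_nodup hl]
    rintro x rfl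
    simp at h2
  · have h1 : l.length = 1 := by have := List.length_pos_of_ne_nil hne; omega
    exact Or.inl ⟨h1, (List.formPerm_eq_one_iff l hl).mpr h1.le⟩

theorem exists_two_cycles_eq {n : ℕ} (σ : Equiv.Perm (Fin n)) (hσ : σ ≠ 1) :
    ∃ C₁ C₂ : Equiv.Perm (Fin n),
      σ = C₁ * C₂ ∧ IsCycleOfLen C₁ (mOf σ) ∧ IsCycleOfLen C₂ (nOf σ) := by
  obtain ⟨l, t, h⟩ := σ.exists_twoCycleSplit
  have hl : l.length = mOf σ := by
    rw [← List.toFinset_card_of_nodup h.nodup_left, h.toFinset_left, mOf]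
  have ht : t.length = nOf σ := h.length_right
  have hl₀ : l ≠ [] := by
    rintro rfl
    exact hσ (Perm.card_support_eq_zero.mp (by simpa [mOf] using hl.symm))
  have ht₀ : t ≠ [] := by
    rintro rfl
    exact hσ (Perm.cycleType_eq_zero.mp
      (Multiset.card_eq_zero.mp (by simpa [nOf] using ht.symm)))
  exact ⟨_, _, h.eq_mul, hl ▸ isCycleOfLen_formPerm h.nodup_left hl₀,
    ht ▸ isCycleOfLen_formPerm h.nodup_right ht₀⟩
end

section
/- (Hall–Kim–Lee type necessity) If σ ∈ S_n is a product σ = C₁C₂ of cycles C₁, C₂ of lengths l₁ ≥ l₂ ≥ 2, and C₁C₂ is not the cycle decomposition of σ (i.e., the supports of C₁ and C₂ intersect), then l₁ + l₂ ≥ m(σ) + n(σ) and l₁ - l₂ ≤ m(σ) - n(σ), and l₁ + l₂ - m(σ) - n(σ) is even. -/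
open Finset Equiv

/-!
Every cycle of `σ = C₁ * C₂` meets `I = supp C₁ ∩ supp C₂`: an orbit of `σ` through a point of
`supp C₁` that avoided `supp C₂` would be the `C₁`-orbit, i.e. all of `supp C₁ ⊇ I`; by symmetry
(via `σ⁻¹ = C₂⁻¹ * C₁⁻¹`) the same holds for points of `supp C₂`. Distinct cycles have disjoint
supports, so `n(σ) ≤ |I ∩ supp σ|`. Together with `supp σ ⊆ supp C₁ ∪ supp C₂` this gives
`m + n ≤ l₁ + l₂`, and with `supp C₁ ⊆ supp σ ∪ supp C₂` it gives `l₁ + n ≤ l₂ + m`.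
The parity statement is the equality of signs `(-1)^(m + n) = sign σ = (-1)^(l₁ + l₂)`.
-/

namespace Equiv.Perm

variable {α : Type*} [Fintype α] [DecidableEq α]

theorem SameCycle.exists_mem_support_sameCycle_mul {f g : Perm α} {x y : α}
    (hxy : f.SameCycle x y) (hy : y ∈ g.support) :
    ∃ z ∈ g.support, f.SameCycle x z ∧ (f * g).SameCycle x z := by
  by_contra! hfix
  have hpow : ∀ k : ℕ, ((f * g) ^ k) x = (f ^ k) x := by
    intro k
    induction k with
    | zero => rfl
    | succ k ih =>
      have hg : g ((f ^ k) x) = (f ^ k) x := by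
        by_contra hmoved
        exact hfix _ (mem_support.mpr hmoved) ⟨k, by simp⟩ (ih ▸ ⟨k, by simp⟩)
      rw [pow_succ', mul_apply, ih, mul_apply, hg, pow_succ', mul_apply]
  obtain ⟨k, rfl⟩ := hxy.exists_nat_pow_eq
  exact hfix _ hy hxy (hpow k ▸ ⟨k, by simp⟩)

theorem IsCycle.exists_mem_inter_sameCycle_mul {c₁ c₂ : Perm α} (h₁ : c₁.IsCycle)
    (h₂ : c₂.IsCycle) (hmeet : (c₁.support ∩ c₂.support).Nonempty) {x : α}
    (hx : x ∈ (c₁ * c₂).support) :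
    ∃ z ∈ c₁.support ∩ c₂.support, (c₁ * c₂).SameCycle x z := by
  obtain ⟨y, hy⟩ := hmeet
  rw [mem_inter] at hy
  rcases mem_union.mp (support_mul_le c₁ c₂ hx) with hx₁ | hx₂
  · obtain ⟨z, hz₂, hz₁, hz⟩ := (h₁.sameCycle (mem_support.mp hx₁)
      (mem_support.mp hy.1)).exists_mem_support_sameCycle_mul hy.2
    exact ⟨z, mem_inter.mpr ⟨hz₁.mem_support_iff.mp hx₁, hz₂⟩, hz⟩
  · have hinv : (c₂⁻¹).SameCycle x y := sameCycle_inv.mpr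
      (h₂.sameCycle (mem_support.mp hx₂) (mem_support.mp hy.2))
    obtain ⟨z, hz₁, hz₂, hz⟩ := hinv.exists_mem_support_sameCycle_mul
      (support_inv c₁ ▸ hy.1)
    rw [support_inv] at hz₁
    rw [sameCycle_inv] at hz₂
    rw [← mul_inv_rev, sameCycle_inv] at hz
    exact ⟨z, mem_inter.mpr ⟨hz₁, hz₂.mem_support_iff.mp hx₂⟩, hz⟩

theorem card_cycleType_le_card_inter_support {σ : Perm α} {T : Finset α}
    (h : ∀ x ∈ σ.support, ∃ z ∈ T, σ.SameCycle x z) :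
    σ.cycleType.card ≤ (T ∩ σ.support).card := by
  rw [cycleType_def, Multiset.card_map]
  refine card_le_card_of_surjOn σ.cycleOf fun c hc => ?_
  obtain ⟨x, hx⟩ := (mem_cycleFactorsFinset_iff.mp hc).1.nonempty_support
  have hxσ : x ∈ σ.support := mem_cycleFactorsFinset_support_le hc hx
  obtain ⟨z, hzT, hxz⟩ := h x hxσ
  refine ⟨z, mem_inter.mpr ⟨hzT, hxz.mem_support_iff.mp hxσ⟩, ?_⟩
  rw [← hxz.cycleOf_eq, ← cycle_is_cycleOf hx hc]

theorem IsCycle.card_support_add_card_cycleType_mul_mod_two {c₁ c₂ : Perm α}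
    (h₁ : c₁.IsCycle) (h₂ : c₂.IsCycle) :
    ((c₁ * c₂).support.card + (c₁ * c₂).cycleType.card) % 2 =
      (c₁.support.card + c₂.support.card) % 2 := by
  have hsign : (-1 : ℤˣ) ^ ((c₁ * c₂).support.card + (c₁ * c₂).cycleType.card) =
      (-1) ^ (c₁.support.card + c₂.support.card) := by
    rw [← sum_cycleType, ← sign_of_cycleType, map_mul, h₁.sign, h₂.sign, pow_add, neg_mul_neg]
  rw [Int.units_pow_eq_pow_mod_two, Int.units_pow_eq_pow_mod_two (-1) (_ + _)] at hsign
  rcases Nat.mod_two_eq_zero_or_one ((c₁ * c₂).support.card + (c₁ * c₂).cycleType.card)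
    with h | h <;>
  rcases Nat.mod_two_eq_zero_or_one (c₁.support.card + c₂.support.card) with h' | h' <;>
  simp_all

end Equiv.Perm

theorem product_of_two_cycles_necessity_general {n : ℕ} (σ C₁ C₂ : Equiv.Perm (Fin n))
    (l₁ l₂ : ℕ)
    (hC₁ : C₁.IsCycle) (hC₂ : C₂.IsCycle)
    (hl₁ : C₁.support.card = l₁) (hl₂ : C₂.support.card = l₂)
    (hσ : σ = C₁ * C₂)
    (hmeet : (C₁.support ∩ C₂.support).Nonempty) :
    mOf σ + nOf σ ≤ l₁ + l₂ ∧
      l₁ + nOf σ ≤ l₂ + mOf σ ∧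
      ∃ s : ℕ, l₁ + l₂ = mOf σ + nOf σ + 2 * s := by
  subst hσ hl₁ hl₂
  have hn : nOf (C₁ * C₂) ≤ (C₁.support ∩ C₂.support ∩ (C₁ * C₂).support).card :=
    Perm.card_cycleType_le_card_inter_support fun _ hx ↦
      hC₁.exists_mem_inter_sameCycle_mul hC₂ hmeet hx
  have hsupp₁ : C₁.support ⊆ C₂.support ∪ (C₁ * C₂).support := by
    simpa [Perm.support_inv, union_comm] using Perm.support_mul_le (C₁ * C₂) C₂⁻¹
  have hle : mOf (C₁ * C₂) + nOf (C₁ * C₂) ≤ C₁.support.card + C₂.support.card :=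
    calc mOf (C₁ * C₂) + nOf (C₁ * C₂)
        ≤ (C₁.support ∪ C₂.support).card + (C₁.support ∩ C₂.support).card :=
          add_le_add (card_le_card (Perm.support_mul_le C₁ C₂))
            (hn.trans (card_le_card inter_subset_left))
      _ = C₁.support.card + C₂.support.card := card_union_add_card_inter _ _
  refine ⟨hle, ?_, ?_⟩
  · calc C₁.support.card + nOf (C₁ * C₂)
        ≤ (C₂.support ∪ (C₁ * C₂).support).card + (C₂.support ∩ (C₁ * C₂).support).card :=
          add_le_add (card_le_card hsupp₁)
            (hn.trans (card_le_card (inter_subset_inter_right inter_subset_right)))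
      _ = C₂.support.card + mOf (C₁ * C₂) := card_union_add_card_inter _ _
  · have hpar := hC₁.card_support_add_card_cycleType_mul_mod_two hC₂
    exact ⟨(C₁.support.card + C₂.support.card - (mOf (C₁ * C₂) + nOf (C₁ * C₂))) / 2, by
      unfold mOf nOf at *; omega⟩

theorem product_of_two_cycles_necessity {n : ℕ} (σ C₁ C₂ : Equiv.Perm (Fin n))
    (l₁ l₂ : ℕ) (h21 : 2 ≤ l₂) (h12 : l₂ ≤ l₁)
    (hC₁ : C₁.IsCycle) (hC₂ : C₂.IsCycle)
    (hl₁ : C₁.support.card = l₁) (hl₂ : C₂.support.card = l₂)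
    (hσ : σ = C₁ * C₂)
    (hmeet : (C₁.support ∩ C₂.support).Nonempty) :
    mOf σ + nOf σ ≤ l₁ + l₂ ∧
      l₁ + nOf σ ≤ l₂ + mOf σ ∧
      ∃ s : ℕ, l₁ + l₂ = mOf σ + nOf σ + 2 * s :=
  product_of_two_cycles_necessity_general σ C₁ C₂ l₁ l₂ hC₁ hC₂ hl₁ hl₂ hσ hmeet
end

section
/- For all natural numbers l₁ ≥ l₂ ≥ 2 with l₁ ≤ n, and every σ ∈ S_n such that l₁ + l₂ = m(σ) + n(σ) + 2s for some s ∈ ℕ and l₁ - l₂ ≤ m(σ) - n(σ), there exist cycles C₁, C₂ ∈ S_n of lengths l₁ and l₂ respectively with σ = C₁C₂. -/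
/-!
Cycles are handled as duplicate-free lists through `List.formPerm`, and we build factorizations
`σ = (L₁)(L₂)` in which the two lists share a point (a one-point list stands for the identity).

When `l₁ + l₂ = m(σ) + n(σ)`, such a factorization is built one cycle of `σ` at a time: a single
cycle `(B y C)` is `(B y)(y C)`, and a cycle `(B y C)` disjoint from `(R₁ x)(x R₂)` is spliced in
at the shared point `x`, since `(R₁ x)(B y C)(x R₂) = (R₁ x B y)(y C x R₂)`. For `σ = 1` one starts
from `(x)(x)` instead.

Each further `2` in `l₁ + l₂` is absorbed by lengthening both cycles by one point: through a point
`u` of the first list missing from the second and a point `v` of the second missing from the first,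
`(R₁ u)(v R₂) = (R₁ u v)(u v R₂)`; if there are none, one list contains the other and a point `z`
outside both exists as long as `l₁ < n`, and `(R₁ x)(x R₂) = (R₁ x z)(z x R₂)`.
-/

open Finset Equiv

namespace List

variable {α : Type*}

theorem exists_isRotated_cons_of_mem {L : List α} {x : α} (h : x ∈ L) :
    ∃ R, L ~r x :: R := by
  obtain ⟨P, T, rfl⟩ := append_of_mem h
  exact ⟨T ++ P, isRotated_append⟩

theorem exists_isRotated_concat_of_mem {L : List α} {x : α} (h : x ∈ L) :
    ∃ R, L ~r R ++ [x] := by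
  obtain ⟨P, T, rfl⟩ := append_of_mem h
  exact ⟨T ++ P, by simpa using (isRotated_append (l := P ++ [x]) (l' := T))⟩

theorem exists_eq_append_cons_of_lt (A : List α) {k : ℕ} (hk : k < A.length) :
    ∃ B y C, A = B ++ y :: C ∧ B.length = k :=
  ⟨A.take k, A[k], A.drop (k + 1), by rw [← drop_eq_getElem_cons, take_append_drop],
    by rw [length_take]; omega⟩

variable [DecidableEq α]

theorem formPerm_append_cons_eq_mul (P T : List α) (x : α) :
    formPerm (P ++ x :: T) = formPerm (P ++ [x]) * formPerm (x :: T) := by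
  induction P with
  | nil => simp
  | cons a P ih =>
    cases P with
    | nil => simp [formPerm_cons_cons]
    | cons b P =>
      simp only [cons_append] at ih ⊢
      rw [formPerm_cons_cons, formPerm_cons_cons, ih, mul_assoc]

theorem formPerm_cons_append_singleton {x : α} {A : List α} (hA : A.Nodup) (hx : x ∉ A) :
    formPerm (x :: (A ++ [x])) = formPerm A := by
  induction A using List.reverseRecOn with
  | nil => exact (formPerm_pair x x).trans (Equiv.swap_self x)
  | append_singleton A a _ =>
    have hrot : formPerm (x :: (A ++ [a])) = formPerm (A ++ [a, x]) := by
      refine formPerm_eq_of_isRotated (nodup_cons.2 ⟨hx, hA⟩) ?_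
      simpa using (isRotated_append (l := [x]) (l' := A ++ [a]))
    rw [show x :: (A ++ [a] ++ [x]) = x :: A ++ [a, x] by simp, formPerm_append_pair,
      cons_append, hrot, formPerm_append_pair, mul_assoc, swap_mul_self, mul_one]

theorem formPerm_splice {P Q B C : List α} {x y : α} (hA : (B ++ y :: C).Nodup)
    (hx : x ∉ B ++ y :: C) :
    formPerm (P ++ x :: (B ++ [y])) * formPerm (y :: (C ++ x :: Q)) =
      formPerm (P ++ [x]) * formPerm (B ++ y :: C) * formPerm (x :: Q) := by
  have hy := formPerm_append_cons_eq_mul (P ++ x :: B) (C ++ x :: Q) y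
  have hx₂ := formPerm_append_cons_eq_mul (x :: (B ++ y :: C)) Q x
  have hA' := formPerm_cons_append_singleton hA hx
  simp only [append_assoc, cons_append] at hy hx₂ hA'
  rw [← hy, formPerm_append_cons_eq_mul P, hx₂, hA', mul_assoc]

theorem exists_formPerm_mul_eq_of_swap_mul_swap_eq_one {L₁ L₂ : List α} (h₁ : L₁.Nodup)
    (h₂ : L₂.Nodup) {a b c d : α} (ha : a ∈ L₁) (hb : b ∉ L₁) (hc : c ∉ L₂) (hd : d ∈ L₂)
    (hswap : Equiv.swap a b * Equiv.swap c d = 1) :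
    ∃ L₁' L₂', L₁' ~ b :: L₁ ∧ L₂' ~ c :: L₂ ∧ L₁'.Nodup ∧ L₂'.Nodup ∧
      formPerm L₁' * formPerm L₂' = formPerm L₁ * formPerm L₂ := by
  obtain ⟨R₁, hR₁⟩ := exists_isRotated_concat_of_mem ha
  obtain ⟨R₂, hR₂⟩ := exists_isRotated_cons_of_mem hd
  have hp₁ : R₁ ++ [a, b] ~ b :: L₁ := by
    simpa using (perm_append_singleton b (R₁ ++ [a])).trans (hR₁.perm.symm.cons b)
  have hp₂ : c :: d :: R₂ ~ c :: L₂ := hR₂.perm.symm.cons c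
  refine ⟨R₁ ++ [a, b], c :: d :: R₂, hp₁, hp₂, hp₁.nodup_iff.2 (nodup_cons.2 ⟨hb, h₁⟩),
    hp₂.nodup_iff.2 (nodup_cons.2 ⟨hc, h₂⟩), ?_⟩
  calc formPerm (R₁ ++ [a, b]) * formPerm (c :: d :: R₂)
      = formPerm (R₁ ++ [a]) * (Equiv.swap a b * Equiv.swap c d) * formPerm (d :: R₂) := by
        rw [formPerm_append_pair, formPerm_cons_cons]; group
    _ = formPerm L₁ * formPerm L₂ := by
        rw [hswap, mul_one, formPerm_eq_of_isRotated h₁ hR₁, formPerm_eq_of_isRotated h₂ hR₂]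

variable [Fintype α]

theorem exists_notMem_of_length_lt (L : List α) (h : L.length < Fintype.card α) :
    ∃ z, z ∉ L := by
  have : L.toFinset ≠ Finset.univ :=
    (Finset.card_lt_iff_ne_univ _).1 ((toFinset_card_le L).trans_lt h)
  simpa [Finset.eq_univ_iff_forall] using this

theorem card_support_formPerm_of_nodup {L : List α} (hL : L.Nodup) (h : 2 ≤ L.length) :
    #(formPerm L).support = L.length := by
  rw [support_formPerm_of_nodup _ hL (by rintro x rfl; simp at h), toFinset_card_of_nodup hL]

end List

namespace Equiv.Perm

variable {α : Type*} [DecidableEq α] [Fintype α]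

theorem two_mul_card_cycleType_le_card_support (σ : Perm α) :
    2 * Multiset.card σ.cycleType ≤ #σ.support := by
  have h := Multiset.card_nsmul_le_sum (s := σ.cycleType) (a := 2)
    (fun _ hx => two_le_of_mem_cycleType hx)
  rwa [sum_cycleType, smul_eq_mul, mul_comm] at h

theorem IsCycle.exists_formPerm_eq {c : Perm α} (hc : c.IsCycle) :
    ∃ A : List α, A.Nodup ∧ A.toFinset = c.support ∧ A.formPerm = c := by
  obtain ⟨x, hx⟩ := hc.nonempty_support
  have hA : (c.toList x).formPerm = c := by
    rw [formPerm_toList, hc.cycleOf_eq (mem_support.1 hx)]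
  refine ⟨c.toList x, nodup_toList c x, ?_, hA⟩
  conv_rhs => rw [← hA]
  exact (List.support_formPerm_of_nodup _ (nodup_toList c x) (toList_ne_singleton c x)).symm

end Equiv.Perm

open List

section LinkedFactorization

variable {α : Type*} [DecidableEq α] {σ τ : Perm α}

structure IsLinkedFactorization (σ : Perm α) (L₁ L₂ : List α) : Prop where
  nodup_left : L₁.Nodup
  nodup_right : L₂.Nodup
  exists_mem_mem : ∃ x ∈ L₁, x ∈ L₂
  eq_mul : σ = formPerm L₁ * formPerm L₂

theorem isLinkedFactorization_one (x : α) : IsLinkedFactorization 1 [x] [x] :=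
  ⟨nodup_singleton x, nodup_singleton x,
    ⟨x, List.mem_singleton_self x, List.mem_singleton_self x⟩, by simp⟩

theorem IsLinkedFactorization.exists_concat_cons {L₁ L₂ : List α}
    (h : IsLinkedFactorization σ L₁ L₂) :
    ∃ x R₁ R₂, IsLinkedFactorization σ (R₁ ++ [x]) (x :: R₂) ∧ R₁ ++ [x] ~ L₁ ∧ x :: R₂ ~ L₂ := by
  obtain ⟨x, hx₁, hx₂⟩ := h.exists_mem_mem
  obtain ⟨R₁, hR₁⟩ := exists_isRotated_concat_of_mem hx₁
  obtain ⟨R₂, hR₂⟩ := exists_isRotated_cons_of_mem hx₂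
  refine ⟨x, R₁, R₂, ⟨hR₁.nodup_iff.1 h.nodup_left, hR₂.nodup_iff.1 h.nodup_right,
    ⟨x, by simp, by simp⟩, ?_⟩, hR₁.perm.symm, hR₂.perm.symm⟩
  rw [h.eq_mul, formPerm_eq_of_isRotated h.nodup_left hR₁,
    formPerm_eq_of_isRotated h.nodup_right hR₂]

theorem IsLinkedFactorization.splice {x y : α} {R₁ R₂ B C : List α}
    (h : IsLinkedFactorization τ (R₁ ++ [x]) (x :: R₂)) (hA : (B ++ y :: C).Nodup)
    (hdisj : ∀ z ∈ B ++ y :: C, z ∉ R₁ ++ x :: R₂)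
    (hcomm : Commute (formPerm (B ++ y :: C)) (formPerm (R₁ ++ [x]))) :
    IsLinkedFactorization (formPerm (B ++ y :: C) * τ) (R₁ ++ x :: (B ++ [y]))
      (y :: (C ++ x :: R₂)) := by
  have hx : x ∉ B ++ y :: C := fun hx => hdisj x hx (by simp)
  refine ⟨?_, ?_, ⟨y, by simp, by simp⟩, ?_⟩
  · rw [← singleton_append, ← append_assoc]
    refine h.nodup_left.append (hA.sublist ?_) fun z h₁ h₂ => hdisj z ?_ ?_
    · exact (singleton_sublist.2 List.mem_cons_self).append_left B
    · simp only [List.mem_append, List.mem_cons] at h₂ ⊢; tauto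
    · simp only [List.mem_append, List.mem_cons] at h₁ ⊢; tauto
  · rw [← cons_append]
    refine (hA.sublist (sublist_append_right B _)).append h.nodup_right fun z h₁ h₂ => hdisj z
      (by simp only [List.mem_append, List.mem_cons] at h₁ ⊢; tauto)
      (by simp only [List.mem_append, List.mem_cons] at h₂ ⊢; tauto)
  · rw [formPerm_splice hA hx, h.eq_mul, ← mul_assoc, hcomm.eq, mul_assoc]

variable [Fintype α]

theorem IsLinkedFactorization.exists_length_succ {L₁ L₂ : List α}
    (h : IsLinkedFactorization σ L₁ L₂) (hl : L₂.length ≤ L₁.length)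
    (hn : L₁.length < Fintype.card α) :
    ∃ L₁' L₂', IsLinkedFactorization σ L₁' L₂' ∧
      L₁'.length = L₁.length + 1 ∧ L₂'.length = L₂.length + 1 := by
  obtain ⟨x, hx₁, hx₂⟩ := h.exists_mem_mem
  suffices ∃ a b c d, a ∈ L₁ ∧ b ∉ L₁ ∧ c ∉ L₂ ∧ d ∈ L₂ ∧ swap a b * swap c d = 1 by
    obtain ⟨a, b, c, d, ha, hb, hc, hd, hswap⟩ := this
    obtain ⟨L₁', L₂', hp₁, hp₂, hn₁, hn₂, heq⟩ :=
      exists_formPerm_mul_eq_of_swap_mul_swap_eq_one h.nodup_left h.nodup_right ha hb hc hd hswap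
    exact ⟨L₁', L₂', ⟨hn₁, hn₂, ⟨x, hp₁.symm.subset (mem_cons_of_mem b hx₁),
      hp₂.symm.subset (mem_cons_of_mem c hx₂)⟩, heq ▸ h.eq_mul⟩, hp₁.length_eq, hp₂.length_eq⟩
  by_cases h₁₂ : L₁ ⊆ L₂
  · obtain ⟨z, hz⟩ := L₂.exists_notMem_of_length_lt (by omega)
    exact ⟨x, z, z, x, hx₁, fun h => hz (h₁₂ h), hz, hx₂, by simp [swap_comm z x]⟩
  by_cases h₂₁ : L₂ ⊆ L₁
  · obtain ⟨z, hz⟩ := L₁.exists_notMem_of_length_lt hn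
    exact ⟨x, z, z, x, hx₁, hz, fun h => hz (h₂₁ h), hx₂, by simp [swap_comm z x]⟩
  obtain ⟨u, hu₁, hu₂⟩ := Set.not_subset.1 h₁₂
  obtain ⟨v, hv₂, hv₁⟩ := Set.not_subset.1 h₂₁
  exact ⟨u, v, u, v, hu₁, hv₁, hu₂, hv₂, swap_mul_self u v⟩

theorem IsLinkedFactorization.exists_length_add (k : ℕ) :
    ∀ {L₁ L₂ : List α}, IsLinkedFactorization σ L₁ L₂ → L₂.length ≤ L₁.length →
      L₁.length + k ≤ Fintype.card α →
      ∃ L₁' L₂', IsLinkedFactorization σ L₁' L₂' ∧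
        L₁'.length = L₁.length + k ∧ L₂'.length = L₂.length + k := by
  induction k with
  | zero => exact fun h _ _ => ⟨_, _, h, rfl, rfl⟩
  | succ k ih =>
    intro L₁ L₂ h hl hn
    obtain ⟨L₁', L₂', h', hl₁, hl₂⟩ := h.exists_length_succ hl (by omega)
    obtain ⟨L₁'', L₂'', h'', hl₁', hl₂'⟩ := ih h' (by omega) (by omega)
    exact ⟨L₁'', L₂'', h'', by omega, by omega⟩

theorem Equiv.Perm.IsCycle.exists_isLinkedFactorization {c : Perm α} (hc : c.IsCycle)
    {l₁ l₂ : ℕ} (h₁ : 1 ≤ l₁) (h₂ : 1 ≤ l₂) (h : l₁ + l₂ = #c.support + 1) :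
    ∃ L₁ L₂, IsLinkedFactorization c L₁ L₂ ∧ L₁.length = l₁ ∧ L₂.length = l₂ ∧
      ∀ z ∈ L₁ ++ L₂, z ∈ c.support := by
  obtain ⟨A, hA, hAc, hAform⟩ := hc.exists_formPerm_eq
  have hlen : A.length = #c.support := by rw [← hAc, toFinset_card_of_nodup hA]
  obtain ⟨B, y, C, rfl, hB⟩ := A.exists_eq_append_cons_of_lt (k := l₁ - 1) (by omega)
  refine ⟨B ++ [y], y :: C, ⟨?_, ?_, ⟨y, by simp, by simp⟩, ?_⟩,
    by rw [length_append, length_singleton, hB]; omega, ?_, ?_⟩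
  · exact hA.sublist ((singleton_sublist.2 List.mem_cons_self).append_left B)
  · exact hA.sublist (sublist_append_right B _)
  · rw [← hAform, formPerm_append_cons_eq_mul]
  · simp only [length_append, length_cons] at hlen ⊢; omega
  · intro z hz
    rw [← hAc, mem_toFinset]
    simp only [List.mem_append, List.mem_cons] at hz ⊢
    tauto

theorem IsLinkedFactorization.exists_cycle_mul {c : Perm α} {L₁ L₂ : List α}
    (h : IsLinkedFactorization τ L₁ L₂) (hL : ∀ z ∈ L₁ ++ L₂, z ∈ τ.support)
    (hc : c.IsCycle) (hd : c.Disjoint τ) {j : ℕ} (hj : 1 ≤ j) (hjc : j ≤ #c.support) :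
    ∃ L₁' L₂', IsLinkedFactorization (c * τ) L₁' L₂' ∧ L₁'.length = L₁.length + j ∧
      L₂'.length + j = L₂.length + #c.support + 1 ∧ ∀ z ∈ L₁' ++ L₂', z ∈ (c * τ).support := by
  obtain ⟨x, R₁, R₂, hR, hp₁, hp₂⟩ := h.exists_concat_cons
  obtain ⟨A, hA, hAc, rfl⟩ := hc.exists_formPerm_eq
  have hlen : A.length = #(formPerm A).support := by rw [← hAc, toFinset_card_of_nodup hA]
  obtain ⟨B, y, C, rfl, hB⟩ := A.exists_eq_append_cons_of_lt (k := j - 1) (by omega)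
  have hRτ : ∀ z ∈ R₁ ++ x :: R₂, z ∈ τ.support := fun z hz => hL z <| by
    simp only [List.mem_append, ← hp₁.mem_iff, ← hp₂.mem_iff, List.mem_cons] at hz ⊢
    tauto
  have hAc' : ∀ z ∈ B ++ y :: C, z ∈ (formPerm (B ++ y :: C)).support := fun z hz => by
    rw [← hAc]; exact mem_toFinset.2 hz
  have hdisj : ∀ z ∈ B ++ y :: C, z ∉ R₁ ++ x :: R₂ := fun z hz hR =>
    Finset.disjoint_left.1 hd.disjoint_support (hAc' z hz) (hRτ z hR)
  have hcomm : Commute (formPerm (B ++ y :: C)) (formPerm (R₁ ++ [x])) :=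
    (hd.mono subset_rfl ((support_formPerm_le _).trans fun z hz => hRτ z <| by
      simp only [List.mem_toFinset, List.mem_append, List.mem_cons] at hz ⊢
      tauto)).commute
  refine ⟨_, _, hR.splice hA hdisj hcomm, ?_, ?_, ?_⟩
  · simp only [length_append, length_cons, ← hp₁.length_eq] at hlen ⊢
    omega
  · simp only [length_append, length_cons, ← hp₂.length_eq] at hlen ⊢
    omega
  · intro z hz
    rw [hd.support_mul, Finset.mem_union]
    by_cases hzA : z ∈ B ++ y :: C
    · exact Or.inl (hAc' z hzA)
    · refine Or.inr (hRτ z ?_)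
      simp only [List.mem_append, List.mem_cons] at hz hzA ⊢
      tauto

end LinkedFactorization

theorem exists_splice_index {l₁ l₂ k m c : ℕ} (hl₂ : 1 ≤ l₂) (hl : l₂ ≤ l₁) (hk : 2 ≤ k)
    (hc : 1 ≤ c) (hm : 2 * c ≤ m) (hsum : l₁ + l₂ = k + m + (c + 1))
    (hdiff : l₁ + (c + 1) ≤ l₂ + (k + m)) :
    ∃ j l₁' l₂', 1 ≤ j ∧ j ≤ k ∧ l₁ = l₁' + j ∧ l₂' + k + 1 = l₂ + j ∧
      1 ≤ l₂' ∧ l₂' ≤ l₁' ∧ l₁' + l₂' = m + c ∧ l₁' + c ≤ l₂' + m := by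
  -- `hsum` makes `k + 1 + c + l₁ - l₂ - m` even, so halving it loses nothing
  let j := max (max 1 (k + 2 - l₂)) ((k + 1 + c + l₁ - l₂ - m) / 2)
  exact ⟨j, l₁ - j, l₂ + j - k - 1, by omega⟩

theorem exists_isLinkedFactorization_of_card_eq {α : Type*} [DecidableEq α] [Fintype α]
    (σ : Perm α) (hσ : σ ≠ 1) :
    ∀ l₁ l₂, 1 ≤ l₂ → l₂ ≤ l₁ →
      l₁ + l₂ = #σ.support + Multiset.card σ.cycleType →
      l₁ + Multiset.card σ.cycleType ≤ l₂ + #σ.support →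
      ∃ L₁ L₂, IsLinkedFactorization σ L₁ L₂ ∧ L₁.length = l₁ ∧ L₂.length = l₂ ∧
        ∀ z ∈ L₁ ++ L₂, z ∈ σ.support := by
  induction σ using Perm.cycle_induction_on with
  | base_one => exact absurd rfl hσ
  | base_cycles σ hc =>
    intro l₁ l₂ hl₂ hl hsum _
    rw [hc.cycleType, Multiset.card_singleton] at hsum
    exact hc.exists_isLinkedFactorization (by omega) hl₂ hsum
  | induction_disjoint c τ hd hc ihc ihτ =>
    rcases eq_or_ne τ 1 with rfl | hτ
    · simpa only [mul_one] using ihc hc.ne_one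
    intro l₁ l₂ hl₂ hl hsum hdiff
    have hsupp : #(c * τ).support = #c.support + #τ.support := by
      rw [hd.support_mul, card_union_of_disjoint hd.disjoint_support]
    have hcyc : Multiset.card (c * τ).cycleType = Multiset.card τ.cycleType + 1 := by
      rw [hd.cycleType_mul, hc.cycleType, Multiset.card_add, Multiset.card_singleton, add_comm]
    rw [hsupp, hcyc] at hsum hdiff
    obtain ⟨j, l₁', l₂', hj, hjk, rfl, hl₂', hl₂'', hl', hsum', hdiff'⟩ :=
      exists_splice_index hl₂ hl hc.two_le_card_support (Perm.card_cycleType_pos.2 hτ)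
        (Perm.two_mul_card_cycleType_le_card_support τ) hsum hdiff
    obtain ⟨L₁, L₂, h, rfl, rfl, hL⟩ := ihτ hτ l₁' l₂' hl₂'' hl' hsum' hdiff'
    obtain ⟨L₁', L₂', h', hL₁', hL₂', hL'⟩ := h.exists_cycle_mul hL hc hd hj hjk
    exact ⟨L₁', L₂', h', hL₁', by omega, hL'⟩

theorem product_of_two_cycles_sufficiency {n : ℕ} (σ : Equiv.Perm (Fin n))
    (l₁ l₂ : ℕ) (h21 : 2 ≤ l₂) (h12 : l₂ ≤ l₁) (h1n : l₁ ≤ n)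
    (hsum : ∃ s : ℕ, l₁ + l₂ = mOf σ + nOf σ + 2 * s)
    (hdiff : l₁ + nOf σ ≤ l₂ + mOf σ) :
    ∃ C₁ C₂ : Equiv.Perm (Fin n),
      C₁.IsCycle ∧ C₂.IsCycle ∧ C₁.support.card = l₁ ∧ C₂.support.card = l₂ ∧
        σ = C₁ * C₂ := by
  obtain ⟨s, hs⟩ := hsum
  unfold mOf nOf at hs hdiff
  obtain ⟨L₁, L₂, k, h, hk₁, hk₂, hl⟩ : ∃ L₁ L₂ k, IsLinkedFactorization σ L₁ L₂ ∧
      L₁.length + k = l₁ ∧ L₂.length + k = l₂ ∧ L₂.length ≤ L₁.length := by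
    rcases eq_or_ne σ 1 with rfl | hσ
    · simp only [Perm.support_one, card_empty, Perm.cycleType_one, Multiset.card_zero] at hdiff
      exact ⟨_, _, l₁ - 1, isLinkedFactorization_one ⟨0, by omega⟩,
        by rw [length_singleton]; omega, by rw [length_singleton]; omega, le_rfl⟩
    · have hcyc := Perm.card_cycleType_pos.2 hσ
      obtain ⟨L₁, L₂, h, h₁, h₂, -⟩ := exists_isLinkedFactorization_of_card_eq σ hσ
        (l₁ - s) (l₂ - s) (by omega) (by omega) (by omega) (by omega)
      exact ⟨_, _, s, h, by omega, by omega, by omega⟩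
  obtain ⟨C₁, C₂, hC, hC₁, hC₂⟩ := h.exists_length_add k hl (by rw [Fintype.card_fin]; omega)
  refine ⟨_, _, isCycle_formPerm hC.nodup_left (by omega),
    isCycle_formPerm hC.nodup_right (by omega), ?_, ?_, hC.eq_mul⟩
  · rw [card_support_formPerm_of_nodup hC.nodup_left (by omega)]; omega
  · rw [card_support_formPerm_of_nodup hC.nodup_right (by omega)]; omega
end

section
/- An element p of the universal sofic group satisfies cyc_i(p) = 0 for all 2 ≤ i < ∞ if and only if p^m is conjugate to p for every positive integer m. -/
open Filter Finset Topology
open scoped Classical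

/-- Normalized Hamming distance between two permutations of `Fin m`. -/
noncomputable def dHam {m : ℕ} (p q : Equiv.Perm (Fin m)) : ℝ :=
  ((Finset.univ.filter fun a => p a ≠ q a).card : ℝ) / m

lemma dHam_nonneg {m : ℕ} (p q : Equiv.Perm (Fin m)) : 0 ≤ dHam p q := by
  unfold dHam; positivity

lemma dHam_mul_le {m : ℕ} (p q : Equiv.Perm (Fin m)) :
    dHam (p * q) 1 ≤ dHam p 1 + dHam q 1 := by
  unfold dHam
  rw [← add_div]
  have hsub : (Finset.univ.filter fun a => (p * q) a ≠ (1 : Equiv.Perm (Fin m)) a) ⊆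
      (Finset.univ.filter fun a => p a ≠ (1 : Equiv.Perm (Fin m)) a) ∪
        (Finset.univ.filter fun a => q a ≠ (1 : Equiv.Perm (Fin m)) a) := by
    intro a ha
    simp only [Finset.mem_filter, Finset.mem_union] at *
    simp only [mem_filter, mem_univ, true_and, mem_union, Equiv.Perm.mul_apply,
      Equiv.Perm.one_apply] at *
    by_contra h
    push_neg at h
    exact ha (by rw [h.2, h.1])
  have hcard := (Finset.card_le_card hsub).trans (Finset.card_union_le _ _)
  have : ((Finset.univ.filter fun a => (p * q) a ≠ (1 : Equiv.Perm (Fin m)) a).card : ℝ) ≤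
      ((Finset.univ.filter fun a => p a ≠ (1 : Equiv.Perm (Fin m)) a).card : ℝ) +
        ((Finset.univ.filter fun a => q a ≠ (1 : Equiv.Perm (Fin m)) a).card : ℝ) := by
    exact_mod_cast hcard
  gcongr

lemma dHam_inv {m : ℕ} (p : Equiv.Perm (Fin m)) : dHam p⁻¹ 1 = dHam p 1 := by
  unfold dHam
  have h : (Finset.univ.filter fun a => p⁻¹ a ≠ (1 : Equiv.Perm (Fin m)) a) =
      (Finset.univ.filter fun a => p a ≠ (1 : Equiv.Perm (Fin m)) a) := by
    apply Finset.filter_congr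
    intro a _
    simp only [Equiv.Perm.one_apply, ne_eq]
    constructor
    · intro h h'; exact h (by rw [Equiv.Perm.inv_eq_iff_eq]; exact h'.symm)
    · intro h h'; rw [Equiv.Perm.inv_eq_iff_eq] at h'; exact h h'.symm
  rw [h]

lemma dHam_conj {m : ℕ} (g p : Equiv.Perm (Fin m)) :
    dHam (g * p * g⁻¹) 1 = dHam p 1 := by
  unfold dHam
  congr 2
  apply Finset.card_bij' (fun a _ => g⁻¹ a) (fun a _ => g a)
  · intro a ha
    simp only [Finset.mem_filter] at *
    simp only [mem_filter, mem_univ, true_and, Equiv.Perm.mul_apply,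
      Equiv.Perm.one_apply, ne_eq] at *
    intro h
    apply ha
    have : g (p (g⁻¹ a)) = g (g⁻¹ a) := congrArg g h
    simpa using this
  · intro a ha
    simp only [Finset.mem_filter] at *
    simp only [mem_filter, mem_univ, true_and, Equiv.Perm.mul_apply,
      Equiv.Perm.one_apply, ne_eq] at *
    intro h
    apply ha
    have := congrArg (fun x => g⁻¹ x) h
    simpa using this
  · intro a _; simp
  · intro a _; simp

variable (ω : Ultrafilter ℕ) (n : ℕ → ℕ)

/-- The sequences of permutations whose normalized Hamming distance to the
identity tends to `0` along `ω`: the kernel of the metric ultraproduct. -/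
noncomputable def soficNull : Subgroup (∀ k, Equiv.Perm (Fin (n k))) where
  carrier := {p | Tendsto (fun k => dHam (p k) 1) (ω : Filter ℕ) (𝓝 0)}
  one_mem' := by
    have : (fun k => dHam ((1 : ∀ k, Equiv.Perm (Fin (n k))) k) 1) = fun _ => (0 : ℝ) := by
      funext k
      simp [dHam]
    simp only [Set.mem_setOf_eq, this]
    exact tendsto_const_nhds
  mul_mem' := by
    intro p q hp hq
    simp only [Set.mem_setOf_eq] at *
    have h0 : Tendsto (fun k => dHam (p k) 1 + dHam (q k) 1) (ω : Filter ℕ) (𝓝 0) := by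
      simpa using hp.add hq
    exact squeeze_zero (fun k => dHam_nonneg _ _) (fun k => dHam_mul_le (p k) (q k)) h0
  inv_mem' := by
    intro p hp
    simp only [Set.mem_setOf_eq] at *
    simpa [dHam_inv] using hp

instance soficNull_normal : (soficNull ω n).Normal := by
  constructor
  intro p hp g
  simp only [soficNull, Subgroup.mem_mk, Set.mem_setOf_eq] at *
  simpa [dHam_conj] using hp

/-- The universal sofic group: the metric ultraproduct of the `S_{n_k}`. -/
noncomputable abbrev UnivSofic := (∀ k, Equiv.Perm (Fin (n k))) ⧸ soficNull ω n

/-- The quotient map onto the universal sofic group. -/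
noncomputable def usMk : (∀ k, Equiv.Perm (Fin (n k))) →* UnivSofic ω n :=
  QuotientGroup.mk' (soficNull ω n)

/-- For `q ∈ S_m`, `cycN q i` is `i` times the number of cycles of `q` of length `i`
(equivalently, the number of points lying in orbits of cardinality `i`). -/
noncomputable def cycN {m : ℕ} (q : Equiv.Perm (Fin m)) (i : ℕ) : ℕ :=
  (Finset.univ.filter fun a =>
    (Finset.univ.filter fun b => q.SameCycle a b).card = i).card

variable {ω n} in
/-- `cyc_i(p) = lim_{k→ω} cyc_i(p_k)/n_k`. -/
noncomputable def cycSeq (p : ∀ k, Equiv.Perm (Fin (n k))) (i : ℕ) : ℝ :=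
  limUnder (ω : Filter ℕ) (fun k => (cycN (p k) i : ℝ) / n k)

variable {ω n} in
/-- `cyc_∞(p) = 1 - Σ_{i ≥ 1} cyc_i(p)`. -/
noncomputable def cycInf (p : ∀ k, Equiv.Perm (Fin (n k))) : ℝ :=
  1 - ∑' i : ℕ, cycSeq (ω := ω) p (i + 1)

variable {ω n} in
/-- `m(p) = lim_{k→ω} |support(p_k)|/n_k`. -/
noncomputable def mSeq (p : ∀ k, Equiv.Perm (Fin (n k))) : ℝ :=
  limUnder (ω : Filter ℕ) (fun k => ((p k).support.card : ℝ) / n k)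

variable {ω n} in
/-- `n(p) = lim_{k→ω} n(p_k)/n_k`, with `n(σ)` the number of nontrivial cycles of `σ`. -/
noncomputable def nSeq (p : ∀ k, Equiv.Perm (Fin (n k))) : ℝ :=
  limUnder (ω : Filter ℕ) (fun k => ((p k).cycleType.card : ℝ) / n k)

variable {ω n} in
/-- The induced metric on the ultraproduct, computed on representatives. -/
noncomputable def dSeq (p q : ∀ k, Equiv.Perm (Fin (n k))) : ℝ :=
  limUnder (ω : Filter ℕ) (fun k => dHam (p k) (q k))

/-!
Suppose almost all points of `p` are fixed or lie on very long cycles. Cut a cycle of `σ` of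
length `L` into `d = gcd L m` blocks of length `b = L / d`, and send the point at position
`u b + v` to the point at position `u + m v`. This is a bijection of the cycle (the residues
`u + m v` are distinct mod `L`), and it carries `σ` to `σ ^ m` except at the `d ≤ m` ends of
blocks. Doing this on every cycle gives a conjugate of `σ` that differs from `σ ^ m` at most on
the cycles of lengths `2, …, T` and on `m` points of each longer cycle, i.e. on a proportion
`∑_{2 ≤ i ≤ T} cyc_i + m / T`; letting `T → ∞` along `ω` shows `p ^ m` is conjugate to `p`.

Conversely, the points on `i`-cycles (`i ≥ 2`) are moved by `σ` but fixed by `σ ^ i`, so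
`|supp σ| - |supp σ ^ i| ≥ cyc_i(σ)`. Conjugates have supports of equal size and the support
size is `1`-Lipschitz for the Hamming distance, so `p ^ i ~ p` forces `cyc_i(p) = 0`.
-/

open Function

theorem Ultrafilter.exists_tendsto_of_forall_mem {β X : Type*} [TopologicalSpace X] {K : Set X}
    (hK : IsCompact K) (l : Ultrafilter β) {f : β → X} (hf : ∀ b, f b ∈ K) :
    ∃ a, Tendsto f l (𝓝 a) := by
  obtain ⟨a, -, ha⟩ := hK.ultrafilter_le_nhds (l.map f) (by
    rw [Ultrafilter.coe_map, le_principal_iff, Filter.mem_map]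
    exact univ_mem' hf)
  exact ⟨a, ha⟩

theorem tendsto_zero_of_le_add_div {ι : Type*} {l : Filter ι} {f : ι → ℝ} {g : ℕ → ι → ℝ}
    {c : ℝ} (hf : ∀ k, 0 ≤ f k) (hg : ∀ T, Tendsto (g T) l (𝓝 0))
    (hfg : ∀ T : ℕ, 0 < T → ∀ k, f k ≤ g T k + c / T) : Tendsto f l (𝓝 0) := by
  refine tendsto_order.2 ⟨fun a ha => .of_forall fun k => ha.trans_le (hf k), fun ε hε => ?_⟩
  obtain ⟨T, hcT, hT⟩ := (((tendsto_const_div_atTop_nhds_zero_nat c).eventually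
    (gt_mem_nhds (half_pos hε))).and (eventually_gt_atTop 0)).exists
  filter_upwards [(hg T).eventually (gt_mem_nhds (half_pos hε))] with k hk
  linarith [hfg T hT k]

theorem Nat.eq_and_eq_of_add_mul_modEq {L m u u' v v' : ℕ} (hL : 0 < L)
    (hu : u < L.gcd m) (hu' : u' < L.gcd m) (hv : v < L / L.gcd m) (hv' : v' < L / L.gcd m)
    (h : u + m * v ≡ u' + m * v' [MOD L]) : u = u' ∧ v = v' := by
  have hm0 : m ≡ 0 [MOD L.gcd m] := Nat.modEq_zero_iff_dvd.2 (L.gcd_dvd_right m)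
  have hmod : u ≡ u' [MOD L.gcd m] := by
    simpa using ((hm0.mul_right v).add_left u).symm.trans
      ((h.of_dvd (L.gcd_dvd_left m)).trans ((hm0.mul_right v').add_left u'))
  rw [Nat.ModEq, Nat.mod_eq_of_lt hu, Nat.mod_eq_of_lt hu'] at hmod
  subst hmod
  have hvv := (Nat.ModEq.add_left_cancel' u h).cancel_left_div_gcd hL
  exact ⟨rfl, Nat.mod_eq_of_lt hv ▸ Nat.mod_eq_of_lt hv' ▸ hvv⟩

namespace Equiv.Perm

variable {α : Type*}

theorem pow_mod_minimalPeriod_apply (σ : Perm α) (x : α) (j : ℕ) :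
    (σ ^ (j % minimalPeriod σ x)) x = (σ ^ j) x :=
  iterate_mod_minimalPeriod_eq

noncomputable def cycleRep (σ : Perm α) (x : α) : α :=
  (Quotient.mk (SameCycle.setoid σ) x).out

theorem sameCycle_cycleRep (σ : Perm α) (x : α) : σ.SameCycle (σ.cycleRep x) x :=
  Quotient.mk_out (s := SameCycle.setoid σ) x

theorem SameCycle.cycleRep_eq {σ : Perm α} {x y : α} (h : σ.SameCycle x y) :
    σ.cycleRep x = σ.cycleRep y :=
  congrArg Quotient.out (Quotient.sound h)

section Finite

variable [Finite α] (σ : Perm α)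

theorem minimalPeriod_pos (x : α) : 0 < minimalPeriod σ x :=
  minimalPeriod_pos_of_mem_periodicPts (σ.injective.mem_periodicPts x)

theorem pow_apply_eq_pow_apply_iff {x : α} {i j : ℕ} :
    (σ ^ i) x = (σ ^ j) x ↔ i % minimalPeriod σ x = j % minimalPeriod σ x := by
  rw [← pow_mod_minimalPeriod_apply σ x i, ← pow_mod_minimalPeriod_apply σ x j]
  exact iterate_eq_iterate_iff_of_lt_minimalPeriod (Nat.mod_lt _ (σ.minimalPeriod_pos x))
    (Nat.mod_lt _ (σ.minimalPeriod_pos x))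

variable {σ} in
theorem SameCycle.minimalPeriod_eq {x y : α} (h : σ.SameCycle x y) :
    minimalPeriod σ x = minimalPeriod σ y := by
  obtain ⟨j, rfl⟩ := h.exists_nat_pow_eq
  exact (minimalPeriod_apply_iterate (σ.injective.mem_periodicPts x) j).symm


noncomputable def cycleIndex (x : α) : ℕ :=
  Nat.find (σ.sameCycle_cycleRep x).exists_nat_pow_eq

theorem pow_cycleIndex_apply (x : α) : (σ ^ σ.cycleIndex x) (σ.cycleRep x) = x :=
  Nat.find_spec (σ.sameCycle_cycleRep x).exists_nat_pow_eq

theorem minimalPeriod_cycleRep (x : α) : minimalPeriod σ (σ.cycleRep x) = minimalPeriod σ x :=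
  (σ.sameCycle_cycleRep x).minimalPeriod_eq

theorem cycleIndex_lt (x : α) : σ.cycleIndex x < minimalPeriod σ x := by
  rw [← minimalPeriod_cycleRep]
  have hmod : (σ ^ (σ.cycleIndex x % minimalPeriod σ (σ.cycleRep x))) (σ.cycleRep x) = x := by
    rw [pow_mod_minimalPeriod_apply, pow_cycleIndex_apply]
  exact (Nat.find_min' _ hmod).trans_lt (Nat.mod_lt _ (σ.minimalPeriod_pos _))

theorem cycleIndex_eq {x : α} {j : ℕ} (hj : j < minimalPeriod σ x)
    (h : (σ ^ j) (σ.cycleRep x) = x) : σ.cycleIndex x = j := by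
  have h' := (σ.pow_cycleIndex_apply x).trans h.symm
  rwa [pow_apply_eq_pow_apply_iff, minimalPeriod_cycleRep,
    Nat.mod_eq_of_lt (σ.cycleIndex_lt x), Nat.mod_eq_of_lt hj] at h'

theorem cycleIndex_apply {x : α} (hx : σ.cycleIndex x + 1 < minimalPeriod σ x) :
    σ.cycleIndex (σ x) = σ.cycleIndex x + 1 := by
  have hsc : σ.SameCycle x (σ x) := sameCycle_apply_right.2 (SameCycle.refl σ x)
  refine σ.cycleIndex_eq (hsc.minimalPeriod_eq ▸ hx) ?_
  rw [← hsc.cycleRep_eq, pow_succ', mul_apply, pow_cycleIndex_apply]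

variable {σ} in
theorem eq_of_cycleRep_eq_of_cycleIndex_eq {x y : α} (hrep : σ.cycleRep x = σ.cycleRep y)
    (hidx : σ.cycleIndex x = σ.cycleIndex y) : x = y := by
  rw [← σ.pow_cycleIndex_apply x, ← σ.pow_cycleIndex_apply y, hrep, hidx]

end Finite

section PowConj

variable (σ : Perm α) (m : ℕ)

/-- The length of the cycles of `σ ^ m` inside the `σ`-cycle of `x`. -/
noncomputable def powCycleLen (x : α) : ℕ := minimalPeriod σ x / (minimalPeriod σ x).gcd m

theorem gcd_mul_powCycleLen (x : α) :
    (minimalPeriod σ x).gcd m * σ.powCycleLen m x = minimalPeriod σ x :=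
  Nat.mul_div_cancel' (Nat.gcd_dvd_left _ _)

variable [Finite α]

theorem powCycleLen_pos (x : α) : 0 < σ.powCycleLen m x :=
  Nat.div_pos (Nat.gcd_le_left _ (σ.minimalPeriod_pos x))
    (Nat.gcd_pos_of_pos_left _ (σ.minimalPeriod_pos x))

theorem div_powCycleLen_lt {x : α} {j : ℕ} (hj : j < minimalPeriod σ x) :
    j / σ.powCycleLen m x < (minimalPeriod σ x).gcd m := by
  rwa [Nat.div_lt_iff_lt_mul (σ.powCycleLen_pos m x), gcd_mul_powCycleLen]

variable {σ} in
theorem SameCycle.powCycleLen_eq {x y : α} (h : σ.SameCycle x y) :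
    σ.powCycleLen m x = σ.powCycleLen m y := by
  rw [powCycleLen, powCycleLen, h.minimalPeriod_eq]

/-- Cut the cycle of `x` into `gcd (minimalPeriod σ x) m` blocks of length `powCycleLen` and
send the point at position `u * powCycleLen + v` to the point at position `u + m * v`. -/
noncomputable def powConjFun (x : α) : α :=
  (σ ^ (σ.cycleIndex x / σ.powCycleLen m x + m * (σ.cycleIndex x % σ.powCycleLen m x)))
    (σ.cycleRep x)

theorem sameCycle_powConjFun (x : α) : σ.SameCycle x (σ.powConjFun m x) :=
  sameCycle_pow_right.2 (σ.sameCycle_cycleRep x).symm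

theorem powConjFun_injective : Injective (σ.powConjFun m) := by
  intro x y h
  have hxy : σ.SameCycle x y := by
    have hx := σ.sameCycle_powConjFun m x
    rw [h] at hx
    exact hx.trans (σ.sameCycle_powConjFun m y).symm
  have hlt : ∀ z, σ.SameCycle z y → σ.cycleIndex z < minimalPeriod σ y := fun z hz =>
    (σ.cycleIndex_lt z).trans_eq hz.minimalPeriod_eq
  have hpos := σ.powCycleLen_pos m y
  unfold powConjFun at h
  rw [hxy.cycleRep_eq, hxy.powCycleLen_eq, pow_apply_eq_pow_apply_iff,
    minimalPeriod_cycleRep] at h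
  obtain ⟨hdiv, hmod⟩ : _ ∧ σ.cycleIndex x % σ.powCycleLen m y =
      σ.cycleIndex y % σ.powCycleLen m y :=
    Nat.eq_and_eq_of_add_mul_modEq (σ.minimalPeriod_pos y)
      (σ.div_powCycleLen_lt m (hlt x hxy)) (σ.div_powCycleLen_lt m (hlt y (.refl σ y)))
      (Nat.mod_lt _ hpos) (Nat.mod_lt _ hpos) h
  refine eq_of_cycleRep_eq_of_cycleIndex_eq hxy.cycleRep_eq ?_
  rw [← Nat.div_add_mod (σ.cycleIndex x) (σ.powCycleLen m y), hdiv, hmod, Nat.div_add_mod]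

theorem powConjFun_apply {x : α}
    (hx : σ.cycleIndex x % σ.powCycleLen m x + 1 < σ.powCycleLen m x) :
    σ.powConjFun m (σ x) = (σ ^ m) (σ.powConjFun m x) := by
  have hsc : σ.SameCycle x (σ x) := sameCycle_apply_right.2 (SameCycle.refl σ x)
  set b := σ.powCycleLen m x
  set j := σ.cycleIndex x
  have hjb : j + 1 = b * (j / b) + (j % b + 1) := by rw [← add_assoc, Nat.div_add_mod]
  have hj : j + 1 < minimalPeriod σ x :=
    calc j + 1 < b * (j / b + 1) := by rw [hjb, mul_add_one]; exact Nat.add_lt_add_left hx _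
      _ ≤ b * (minimalPeriod σ x).gcd m :=
        Nat.mul_le_mul_left _ (σ.div_powCycleLen_lt m (σ.cycleIndex_lt x))
      _ = minimalPeriod σ x := by rw [mul_comm, gcd_mul_powCycleLen]
  obtain ⟨hdiv, hmod⟩ := (Nat.div_mod_unique (σ.powCycleLen_pos m x)).2
    ⟨(add_comm _ _).trans hjb.symm, hx⟩
  rw [powConjFun, powConjFun, ← hsc.cycleRep_eq, ← hsc.powCycleLen_eq, σ.cycleIndex_apply hj,
    hdiv, hmod, ← mul_apply, ← pow_add]
  congr 2
  ring

theorem powConjFun_of_apply_eq_self {x : α} (hx : σ x = x) : σ.powConjFun m x = x :=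
  ((σ.sameCycle_powConjFun m x).eq_of_left hx).symm

noncomputable def powConj : Perm α :=
  Equiv.ofBijective _ (Finite.injective_iff_bijective.1 (σ.powConjFun_injective m))

theorem powConj_apply (x : α) : σ.powConj m x = σ.powConjFun m x := rfl

end PowConj

section Counting

variable [Fintype α] [DecidableEq α] (σ : Perm α)

theorem card_sameCycle (x : α) :
    #{y | σ.SameCycle x y} = minimalPeriod σ x := by
  have horbit : ({y | σ.SameCycle x y} : Finset α) =
      (range (minimalPeriod σ x)).image fun j => (σ ^ j) x := by
    ext y
    simp only [Finset.mem_filter, Finset.mem_univ, true_and, Finset.mem_image, Finset.mem_range]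
    constructor
    · intro h
      obtain ⟨j, rfl⟩ := h.exists_nat_pow_eq
      exact ⟨j % minimalPeriod σ x, Nat.mod_lt _ (σ.minimalPeriod_pos x),
        pow_mod_minimalPeriod_apply σ x j⟩
    · rintro ⟨j, -, rfl⟩
      exact sameCycle_pow_right.2 (SameCycle.refl σ x)
  rw [horbit, card_image_of_injOn, card_range]
  intro i hi j hj hij
  rw [coe_range, Set.mem_Iio] at hi hj
  rwa [pow_apply_eq_pow_apply_iff, Nat.mod_eq_of_lt hi, Nat.mod_eq_of_lt hj] at hij

theorem card_cycleRep_mul_le (T : ℕ) :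
    #{x | σ.cycleRep x = x ∧ T < minimalPeriod σ x} * T ≤ Fintype.card α := by
  calc #{x | σ.cycleRep x = x ∧ T < minimalPeriod σ x} * T
      = #(({x | σ.cycleRep x = x ∧ T < minimalPeriod σ x} : Finset α) ×ˢ range T) := by
        rw [card_product, card_range]
    _ ≤ #(univ : Finset α) :=
        card_le_card_of_injOn (fun bt => (σ ^ bt.2) bt.1) (fun _ _ => mem_univ _) ?_
    _ = Fintype.card α := card_univ
  rintro ⟨b, t⟩ hbt ⟨b', t'⟩ hbt' h
  simp only [coe_product, coe_filter, mem_univ, true_and, coe_range, Set.mem_prod,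
    Set.mem_ofPred_eq, Set.mem_Iio] at hbt hbt' h
  have hb : b = b' := by
    have hsc : σ.SameCycle b b' :=
      (sameCycle_pow_right.2 (.refl σ b)).trans (h ▸ sameCycle_pow_right.2 (.refl σ b')).symm
    rw [← hbt.1.1, ← hbt'.1.1, hsc.cycleRep_eq]
  subst hb
  rw [pow_apply_eq_pow_apply_iff, Nat.mod_eq_of_lt (hbt.2.trans hbt.1.2),
    Nat.mod_eq_of_lt (hbt'.2.trans hbt.1.2)] at h
  rw [h]

theorem card_blockEnd_le {m : ℕ} (hm : 0 < m) (T : ℕ) :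
    #{x | T < minimalPeriod σ x ∧ σ.powCycleLen m x ≤ σ.cycleIndex x % σ.powCycleLen m x + 1} ≤
      #{x | σ.cycleRep x = x ∧ T < minimalPeriod σ x} * m := by
  calc _ ≤ #(({x | σ.cycleRep x = x ∧ T < minimalPeriod σ x} : Finset α) ×ˢ range m) :=
        card_le_card_of_injOn (fun x => (σ.cycleRep x, σ.cycleIndex x / σ.powCycleLen m x))
          (fun x hx => ?_) ?_
    _ = _ := by rw [card_product, card_range]
  · simp only [coe_filter, mem_univ, true_and, Set.mem_ofPred_eq] at hx
    simp only [coe_product, coe_filter, mem_univ, true_and, coe_range, Set.mem_prod,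
      Set.mem_ofPred_eq, Set.mem_Iio, (σ.sameCycle_cycleRep x).cycleRep_eq,
      minimalPeriod_cycleRep]
    exact ⟨hx.1, (σ.div_powCycleLen_lt m (σ.cycleIndex_lt x)).trans_le
      (Nat.gcd_le_right _ hm)⟩
  intro x hx y hy h
  simp only [coe_filter, mem_univ, true_and, Set.mem_ofPred_eq, Prod.mk.injEq] at hx hy h
  have hxy : σ.SameCycle x y :=
    (σ.sameCycle_cycleRep x).symm.trans (h.1 ▸ σ.sameCycle_cycleRep y)
  rw [← hxy.powCycleLen_eq] at hy h
  have hmx := Nat.mod_lt (σ.cycleIndex x) (σ.powCycleLen_pos m x)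
  have hmy := Nat.mod_lt (σ.cycleIndex y) (σ.powCycleLen_pos m x)
  refine eq_of_cycleRep_eq_of_cycleIndex_eq h.1 ?_
  rw [← Nat.div_add_mod (σ.cycleIndex x) (σ.powCycleLen m x),
    ← Nat.div_add_mod (σ.cycleIndex y) (σ.powCycleLen m x), h.2]
  omega

theorem card_conj_apply_ne (g a b : Perm α) :
    #{x | (g * a * g⁻¹) x ≠ b x} = #{x | g (a x) ≠ b (g x)} :=
  card_equiv g.symm fun x => by simp only [mem_filter, mem_univ, true_and]; simp

theorem card_powConj_ne_mul_le {m : ℕ} (hm : 0 < m) (T : ℕ) :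
    #{x | (σ.powConj m * σ * (σ.powConj m)⁻¹) x ≠ (σ ^ m) x} * T ≤
      #{x | 1 < minimalPeriod σ x ∧ minimalPeriod σ x ≤ T} * T + m * Fintype.card α := by
  have hsub : ({x | σ.powConj m (σ x) ≠ (σ ^ m) (σ.powConj m x)} : Finset α) ⊆
      ({x | 1 < minimalPeriod σ x ∧ minimalPeriod σ x ≤ T} : Finset α) ∪
        ({x | T < minimalPeriod σ x ∧
          σ.powCycleLen m x ≤ σ.cycleIndex x % σ.powCycleLen m x + 1} : Finset α) := by
    intro x hx
    simp only [mem_filter, mem_univ, true_and, mem_union] at hx ⊢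
    simp only [powConj_apply] at hx
    have hfix : σ x ≠ x := fun hfix => hx (by
      rw [hfix, powConjFun_of_apply_eq_self σ m hfix, pow_apply_eq_self_of_apply_eq_self hfix])
    have hL : 1 < minimalPeriod σ x := lt_of_le_of_ne (σ.minimalPeriod_pos x)
      (fun h => hfix (minimalPeriod_eq_one_iff_isFixedPt.1 h.symm))
    have hblockEnd : σ.powCycleLen m x ≤ σ.cycleIndex x % σ.powCycleLen m x + 1 :=
      not_lt.1 fun h => hx (σ.powConjFun_apply m h)
    by_cases hT : minimalPeriod σ x ≤ T
    exacts [Or.inl ⟨hL, hT⟩, Or.inr ⟨not_le.1 hT, hblockEnd⟩]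
  have hcard := (card_le_card hsub).trans (card_union_le _ _)
  rw [← card_conj_apply_ne] at hcard
  have hblockEnd := σ.card_blockEnd_le hm T
  have hrep := σ.card_cycleRep_mul_le T
  nlinarith

theorem card_support_le_card_support_add (a b : Perm α) :
    #a.support ≤ #b.support + #{x | a x ≠ b x} := by
  refine (card_le_card fun x hx => ?_).trans (card_union_le _ _)
  by_cases h : a x = b x
  · exact mem_union_left _ (mem_support.2 (h ▸ mem_support.1 hx))
  · exact mem_union_right _ (mem_filter.2 ⟨mem_univ x, h⟩)

theorem card_support_pow_add_le {i : ℕ} (hi : 2 ≤ i) :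
    #(σ ^ i).support + #{x | minimalPeriod σ x = i} ≤ #σ.support := by
  rw [← card_union_of_disjoint]
  · refine card_le_card (union_subset (support_pow_le σ i) fun x hx => mem_support.2 ?_)
    intro hfix
    have := minimalPeriod_eq_one_iff_isFixedPt.2 hfix
    rw [(mem_filter.1 hx).2] at this
    omega
  · refine disjoint_left.2 fun x hx hx' => mem_support.1 hx ?_
    rw [← (mem_filter.1 hx').2]
    exact iterate_minimalPeriod

end Counting

end Equiv.Perm

section Sofic

open Equiv.Perm

variable {N : ℕ}

theorem dHam_inv_mul_one (p q : Equiv.Perm (Fin N)) : dHam (p⁻¹ * q) 1 = dHam p q := by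
  unfold dHam
  congr 3
  refine filter_congr fun a _ => ?_
  rw [Equiv.Perm.mul_apply, Equiv.Perm.one_apply, ne_eq, Equiv.Perm.inv_eq_iff_eq, ne_comm]

theorem cycN_eq_card_minimalPeriod_eq (σ : Equiv.Perm (Fin N)) (i : ℕ) :
    cycN σ i = #{x | minimalPeriod σ x = i} := by
  simp only [cycN, card_sameCycle]

theorem sum_cycN_Icc (σ : Equiv.Perm (Fin N)) (T : ℕ) :
    ∑ i ∈ Icc 2 T, cycN σ i = #{x | 1 < minimalPeriod σ x ∧ minimalPeriod σ x ≤ T} := by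
  rw [card_eq_sum_card_fiberwise (f := minimalPeriod σ) (t := Icc 2 T)]
  · refine sum_congr rfl fun i hi => ?_
    rw [cycN_eq_card_minimalPeriod_eq, filter_filter]
    refine congrArg card (filter_congr fun x _ => ?_)
    rw [mem_Icc] at hi
    constructor
    · rintro rfl
      exact ⟨⟨hi.1, hi.2⟩, rfl⟩
    · exact fun h => h.2
  · intro x hx
    simp only [coe_filter, mem_univ, true_and, Set.mem_ofPred_eq] at hx
    exact mem_Icc.2 ⟨hx.1, hx.2⟩

theorem exists_isConj_dHam_pow_le (σ : Equiv.Perm (Fin N)) {m : ℕ} (hm : 0 < m) :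
    ∃ τ, IsConj σ τ ∧ ∀ T : ℕ, 0 < T →
      dHam τ (σ ^ m) ≤ ∑ i ∈ Icc 2 T, (cycN σ i : ℝ) / N + m / T := by
  refine ⟨σ.powConj m * σ * (σ.powConj m)⁻¹, isConj_iff.2 ⟨_, rfl⟩, fun T hT => ?_⟩
  have hcount := σ.card_powConj_ne_mul_le hm T
  rw [Fintype.card_fin, ← sum_cycN_Icc] at hcount
  rw [dHam, ← sum_div, ← Nat.cast_sum]
  rcases N.eq_zero_or_pos with rfl | hN
  · simp only [Nat.cast_zero, div_zero, zero_add]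
    positivity
  have hT' : (0 : ℝ) < T := Nat.cast_pos.2 hT
  have hN' : (0 : ℝ) < N := Nat.cast_pos.2 hN
  rw [div_add_div _ _ hN'.ne' hT'.ne', div_le_div_iff₀ hN' (by positivity)]
  have hcount' : (#{x | (σ.powConj m * σ * (σ.powConj m)⁻¹) x ≠ (σ ^ m) x} : ℝ) * T ≤
      ((∑ i ∈ Icc 2 T, cycN σ i : ℕ) : ℝ) * T + m * N := by
    exact_mod_cast hcount
  nlinarith [mul_le_mul_of_nonneg_right hcount' hN'.le]

theorem cycN_div_le_dHam {σ τ : Equiv.Perm (Fin N)} (h : IsConj σ τ) {i : ℕ} (hi : 2 ≤ i) :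
    (cycN σ i : ℝ) / N ≤ dHam τ (σ ^ i) := by
  obtain ⟨g, rfl⟩ := isConj_iff.1 h
  have hsupp := card_support_le_card_support_add (g * σ * g⁻¹) (σ ^ i)
  have hcyc := σ.card_support_pow_add_le hi
  rw [card_support_conj] at hsupp
  have hle : #{x | minimalPeriod σ x = i} ≤ #{x | (g * σ * g⁻¹) x ≠ (σ ^ i) x} := by omega
  rw [dHam, cycN_eq_card_minimalPeriod_eq]
  exact div_le_div_of_nonneg_right (by exact_mod_cast hle) (Nat.cast_nonneg _)

variable {ω n}

theorem usMk_eq_usMk_iff {p q : ∀ k, Equiv.Perm (Fin (n k))} :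
    usMk ω n p = usMk ω n q ↔ Tendsto (fun k => dHam (p k) (q k)) ω (𝓝 0) := by
  change (p : UnivSofic ω n) = q ↔ _
  rw [QuotientGroup.eq]
  change Tendsto (fun k => dHam (p⁻¹ k * q k) 1) ω (𝓝 0) ↔ _
  simp only [Pi.inv_apply, dHam_inv_mul_one]

theorem isConj_usMk_iff {p r : ∀ k, Equiv.Perm (Fin (n k))} :
    IsConj (usMk ω n p) (usMk ω n r) ↔ ∃ q : ∀ k, Equiv.Perm (Fin (n k)),
      (∀ k, IsConj (p k) (q k)) ∧ Tendsto (fun k => dHam (q k) (r k)) ω (𝓝 0) := by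
  constructor
  · intro h
    obtain ⟨c, hc⟩ := isConj_iff.1 h
    obtain ⟨g, rfl⟩ := QuotientGroup.mk'_surjective (soficNull ω n) c
    refine ⟨g * p * g⁻¹, fun k => isConj_iff.2 ⟨g k, rfl⟩, usMk_eq_usMk_iff.1 ?_⟩
    rw [map_mul, map_mul, map_inv]
    exact hc
  · rintro ⟨q, hq, hlim⟩
    choose g hg using fun k => isConj_iff.1 (hq k)
    refine isConj_iff.2 ⟨usMk ω n g, ?_⟩
    rw [← map_inv, ← map_mul, ← map_mul, show g * p * g⁻¹ = q from funext hg]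
    exact usMk_eq_usMk_iff.2 hlim

theorem cycSeq_eq_zero_iff {p : ∀ k, Equiv.Perm (Fin (n k))} {i : ℕ} :
    cycSeq (ω := ω) p i = 0 ↔ Tendsto (fun k => (cycN (p k) i : ℝ) / n k) ω (𝓝 0) := by
  refine ⟨fun h => ?_, fun h => h.limUnder_eq⟩
  have hbound : ∀ k, (cycN (p k) i : ℝ) / n k ∈ Set.Icc 0 1 := fun k => by
    have hle : cycN (p k) i ≤ n k := (card_filter_le _ _).trans_eq (card_fin _)
    exact ⟨by positivity, div_le_one_of_le₀ (by exact_mod_cast hle) (Nat.cast_nonneg _)⟩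
  have hlim := tendsto_nhds_limUnder (Ultrafilter.exists_tendsto_of_forall_mem isCompact_Icc ω
    hbound)
  rwa [← cycSeq, h] at hlim

end Sofic

theorem cyc_one_infty_iff_pow_conj (p : ∀ k, Equiv.Perm (Fin (n k))) :
    (∀ i : ℕ, 2 ≤ i → cycSeq (ω := ω) p i = 0) ↔
      ∀ m : ℕ, 1 ≤ m → IsConj (usMk ω n p) ((usMk ω n p) ^ m) := by
  simp only [cycSeq_eq_zero_iff, ← map_pow, isConj_usMk_iff]
  constructor
  · intro hcyc m hm
    choose τ hconj hclose using fun k => exists_isConj_dHam_pow_le (p k) hm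
    refine ⟨τ, hconj, tendsto_zero_of_le_add_div (fun k => dHam_nonneg _ _) (fun T => ?_)
      fun T hT k => hclose k T hT⟩
    simpa using tendsto_finsetSum (Icc 2 T) fun i hi => hcyc i (mem_Icc.1 hi).1
  · intro hconj i hi
    obtain ⟨q, hq, hlim⟩ := hconj i (one_le_two.trans hi)
    exact squeeze_zero (fun k => by positivity) (fun k => cycN_div_le_dHam (hq k) hi) hlim
end
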